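/- arXiv:2311.17800 — 3 statements merged into one kernel-verified Lean document; each statement's English description precedes it below -/
import Mathlib

section
/- If β is a 2-form in Ω²₇, i.e. β_{ab}Φ_{abij} = −6β_{ij}, then the triple contraction of β ⋄ Φ with Φ recovers β up to a factor 96: ((β ⋄ Φ) ⌟₃ Φ)_{pq} := (β ⋄ Φ)_{pijk}Φ_{qijk} = 96 β_{pq}, where (β ⋄ Φ)_{ijkl} = β_{ip}Φ_{pjkl} + β_{jp}Φ_{ipkl} + β_{kp}Φ_{ijpl} + β_{lp}Φ_{ijkp}. -/
open Finset

/-- Kronecker delta on `Fin 8`, valued in `ℝ`. -/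
def kdelta (i j : Fin 8) : ℝ := if i = j then 1 else 0

/-- The diamond operation of a 2-form `β` with the 4-form `Φ`. -/
def diamond (β : Fin 8 → Fin 8 → ℝ) (Φ : Fin 8 → Fin 8 → Fin 8 → Fin 8 → ℝ)
    (i j k l : Fin 8) : ℝ :=
  ∑ p, (β i p * Φ p j k l + β j p * Φ i p k l + β k p * Φ i j p l + β l p * Φ i j k p)

/-- for `β ∈ Ω²₇`, the triple contraction of `β ⋄ Φ` with `Φ` is `96 β`. -/
theorem triple_contraction_diamond_omega27
    (Φ : Fin 8 → Fin 8 → Fin 8 → Fin 8 → ℝ)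
    (hanti : ∀ i j k l, Φ j i k l = -Φ i j k l ∧ Φ i k j l = -Φ i j k l ∧
      Φ i j l k = -Φ i j k l)
    (hcontr : ∀ i j a b, ∑ k, ∑ l, Φ i j k l * Φ a b k l =
      6 * kdelta i a * kdelta j b - 6 * kdelta i b * kdelta j a - 4 * Φ i j a b)
    (hcontr3 : ∀ i a, ∑ j, ∑ k, ∑ l, Φ i j k l * Φ a j k l = 42 * kdelta i a)
    (β : Fin 8 → Fin 8 → ℝ) (hβanti : ∀ i j, β j i = -β i j)
    (hβ7 : ∀ i j, ∑ a, ∑ b, β a b * Φ a b i j = -6 * β i j) :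
    ∀ p q, ∑ i, ∑ j, ∑ k, diamond β Φ p i j k * Φ q i j k = 96 * β p q := by
  intro p q
  have h12 : ∀ i j k l, Φ j i k l = -Φ i j k l := fun i j k l => (hanti i j k l).1
  have h23 : ∀ i j k l, Φ i k j l = -Φ i j k l := fun i j k l => (hanti i j k l).2.1
  have h34 : ∀ i j k l, Φ i j l k = -Φ i j k l := fun i j k l => (hanti i j k l).2.2
  -- Φ a b c d = Φ a d b c  (move last index to 2nd slot: even permutation)
  have hD : ∀ a b c d, Φ a b c d = Φ a d b c := by
    intro a b c d
    have e1 := h34 a b c d   -- Φ a b d c = -Φ a b c d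
    have e2 := h23 a b d c   -- Φ a d b c = -Φ a b d c
    linarith
  -- Φ a b c d = Φ d b a c
  have hB3 : ∀ a b c d, Φ a b c d = Φ d b a c := by
    intro a b c d
    have e1 := hD a b c d        -- Φ a b c d = Φ a d b c
    have e2 := h12 a d b c       -- Φ d a b c = -Φ a d b c
    have e3 := h23 d a b c       -- Φ d b a c = -Φ d a b c
    linarith
  have hβ0 : ∀ i, β i i = 0 := fun i => by have := hβanti i i; linarith
  -- generic reorder lemmas over Fin 8
  have swapkm : ∀ (f : Fin 8 → Fin 8 → Fin 8 → Fin 8 → ℝ),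
      ∑ i, ∑ j, ∑ k, ∑ m, f i j k m = ∑ i, ∑ j, ∑ m, ∑ k, f i j k m := by
    intro f
    exact Finset.sum_congr rfl fun i _ => Finset.sum_congr rfl fun j _ => Finset.sum_comm
  have swapjm : ∀ (f : Fin 8 → Fin 8 → Fin 8 → ℝ),
      ∑ i, ∑ j, ∑ m, f i j m = ∑ i, ∑ m, ∑ j, f i j m := by
    intro f
    exact Finset.sum_congr rfl fun i _ => Finset.sum_comm
  -- the main inner-sum computation shared by terms B, C, D:
  have core : ∀ (γ : Fin 8 → Fin 8 → ℝ), (∀ i j, γ j i = -γ i j) →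
      (∀ i j, ∑ a, ∑ b, γ a b * Φ a b i j = -6 * γ i j) →
      ∑ i, ∑ m, γ i m * (6 * kdelta p q * kdelta m i - 6 * kdelta p i * kdelta m q
        - 4 * Φ p m q i) = 18 * γ p q := by
    intro γ hγa hγ7
    have hγ0 : ∀ i, γ i i = 0 := fun i => by have := hγa i i; linarith
    have expand : ∀ i m, γ i m * (6 * kdelta p q * kdelta m i - 6 * kdelta p i * kdelta m q
        - 4 * Φ p m q i) = γ i m * (6 * kdelta p q * kdelta m i)
        - γ i m * (6 * kdelta p i * kdelta m q) - 4 * (γ i m * Φ i m p q) := by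
      intro i m
      rw [hB3 p m q i]
      ring
    simp only [expand]
    simp only [Finset.sum_sub_distrib, ← Finset.mul_sum]
    have s1 : ∑ i, ∑ m, γ i m * (6 * kdelta p q * kdelta m i) = 0 := by
      simp [kdelta, mul_ite, ite_mul, Finset.sum_ite_eq, Finset.sum_ite_eq', hγ0]
    have s2 : ∑ i, ∑ m, γ i m * (6 * kdelta p i * kdelta m q) = 6 * γ p q := by
      simp [kdelta, mul_ite, ite_mul, Finset.sum_ite_eq, Finset.sum_ite_eq']
      ring
    rw [s1, s2, hγ7 p q]
    ring
  -- Term A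
  have TA : ∑ i, ∑ j, ∑ k, (∑ m, β p m * Φ m i j k) * Φ q i j k = 42 * β p q := by
    have pt : ∀ i j k, (∑ m, β p m * Φ m i j k) * Φ q i j k
        = ∑ m, β p m * (Φ m i j k * Φ q i j k) := by
      intro i j k
      rw [Finset.sum_mul]
      exact Finset.sum_congr rfl fun m _ => mul_assoc _ _ _
    simp only [pt]
    rw [swapkm, swapjm]
    have pull : ∀ i, ∑ m, (∑ j, ∑ k, β p m * (Φ m i j k * Φ q i j k))
        = ∑ m, β p m * (∑ j, ∑ k, Φ m i j k * Φ q i j k) := by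
      intro i
      exact Finset.sum_congr rfl fun m _ => by simp [Finset.mul_sum]
    simp only [pull]
    rw [Finset.sum_comm]
    have inner : ∀ m, ∑ i, β p m * (∑ j, ∑ k, Φ m i j k * Φ q i j k)
        = β p m * (42 * kdelta m q) := by
      intro m
      rw [← Finset.mul_sum, hcontr3 m q]
    simp only [inner]
    simp [kdelta, mul_ite, Finset.sum_ite_eq, Finset.sum_ite_eq']
    ring
  -- Term B
  have TB : ∑ i, ∑ j, ∑ k, (∑ m, β i m * Φ p m j k) * Φ q i j k = 18 * β p q := by
    have pt : ∀ i j k, (∑ m, β i m * Φ p m j k) * Φ q i j k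
        = ∑ m, β i m * (Φ p m j k * Φ q i j k) := by
      intro i j k
      rw [Finset.sum_mul]
      exact Finset.sum_congr rfl fun m _ => mul_assoc _ _ _
    simp only [pt]
    rw [swapkm, swapjm]
    have pull : ∀ i m, ∑ j, ∑ k, β i m * (Φ p m j k * Φ q i j k)
        = β i m * (6 * kdelta p q * kdelta m i - 6 * kdelta p i * kdelta m q - 4 * Φ p m q i) := by
      intro i m
      simp only [← Finset.mul_sum]
      rw [hcontr p m q i]
    simp only [pull]
    exact core β hβanti hβ7
  -- Term C
  have TC : ∑ i, ∑ j, ∑ k, (∑ m, β j m * Φ p i m k) * Φ q i j k = 18 * β p q := by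
    have pt : ∀ i j k, (∑ m, β j m * Φ p i m k) * Φ q i j k
        = ∑ m, β j m * (Φ p m i k * Φ q j i k) := by
      intro i j k
      rw [Finset.sum_mul]
      refine Finset.sum_congr rfl fun m _ => ?_
      have e1 := h23 p i m k  -- Φ p m i k = -Φ p i m k
      have e2 := h23 q i j k  -- Φ q j i k = -Φ q i j k
      rw [e1, e2]; ring
    simp only [pt]
    -- reorder: ∑ i ∑ j ∑ k ∑ m f → ∑ j ∑ m ∑ i ∑ k f
    rw [swapkm]
    -- now ∑ i ∑ j ∑ m ∑ k ; swap i j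
    rw [Finset.sum_comm]
    -- ∑ j ∑ i ∑ m ∑ k ; swap i m inside j
    rw [swapjm]
    -- ∑ j ∑ m ∑ i ∑ k
    have pull : ∀ j m, ∑ i, ∑ k, β j m * (Φ p m i k * Φ q j i k)
        = β j m * (6 * kdelta p q * kdelta m j - 6 * kdelta p j * kdelta m q - 4 * Φ p m q j) := by
      intro j m
      simp only [← Finset.mul_sum]
      rw [hcontr p m q j]
    simp only [pull]
    exact core β hβanti hβ7
  -- Term D
  have TD : ∑ i, ∑ j, ∑ k, (∑ m, β k m * Φ p i j m) * Φ q i j k = 18 * β p q := by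
    have pt : ∀ i j k, (∑ m, β k m * Φ p i j m) * Φ q i j k
        = ∑ m, β k m * (Φ p m i j * Φ q k i j) := by
      intro i j k
      rw [Finset.sum_mul]
      refine Finset.sum_congr rfl fun m _ => ?_
      have e1 := hD p i j m  -- Φ p i j m = Φ p m i j
      have e2 := hD q i j k  -- Φ q i j k = Φ q k i j
      rw [← e1, ← e2]; ring
    simp only [pt]
    -- ∑ i ∑ j ∑ k ∑ m f → ∑ k ∑ m ∑ i ∑ j f
    -- step 1: swap j,k inside i : need lemma
    have st1 : ∀ (f : Fin 8 → Fin 8 → Fin 8 → Fin 8 → ℝ),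
        ∑ i, ∑ j, ∑ k, ∑ m, f i j k m = ∑ i, ∑ k, ∑ j, ∑ m, f i j k m :=
      fun f => Finset.sum_congr rfl fun i _ => Finset.sum_comm
    rw [st1]
    -- step 2: swap j,m inside i,k
    have st2 : ∀ (f : Fin 8 → Fin 8 → Fin 8 → Fin 8 → ℝ),
        ∑ i, ∑ k, ∑ j, ∑ m, f i j k m = ∑ i, ∑ k, ∑ m, ∑ j, f i j k m :=
      fun f => Finset.sum_congr rfl fun i _ => Finset.sum_congr rfl fun k _ => Finset.sum_comm
    rw [st2]
    -- step 3: swap i,k outer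
    rw [Finset.sum_comm]
    -- step 4: swap i,m inside k
    rw [swapjm]
    have pull : ∀ k m, ∑ i, ∑ j, β k m * (Φ p m i j * Φ q k i j)
        = β k m * (6 * kdelta p q * kdelta m k - 6 * kdelta p k * kdelta m q - 4 * Φ p m q k) := by
      intro k m
      simp only [← Finset.mul_sum]
      rw [hcontr p m q k]
    simp only [pull]
    exact core β hβanti hβ7
  -- combine
  have expand : ∀ i j k, diamond β Φ p i j k * Φ q i j k
      = (∑ m, β p m * Φ m i j k) * Φ q i j k + (∑ m, β i m * Φ p m j k) * Φ q i j k
      + (∑ m, β j m * Φ p i m k) * Φ q i j k + (∑ m, β k m * Φ p i j m) * Φ q i j k := by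
    intro i j k
    simp only [diamond, Finset.sum_add_distrib]
    ring
  simp only [expand, Finset.sum_add_distrib]
  rw [TA, TB, TC, TD]
  ring
end

section
/- If β is a 2-form in Ω²₂₁, i.e. β_{ab}Φ_{abij} = 2β_{ij}, and β satisfies β_{ab}Φ_{bpqr} = β_{pi}Φ_{iqra} + β_{qi}Φ_{irpa} + β_{ri}Φ_{ipqa}, then β ⋄ Φ = 0, where (β ⋄ Φ)_{ijkl} = β_{ip}Φ_{pjkl} + β_{jp}Φ_{ipkl} + β_{kp}Φ_{ijpl} + β_{lp}Φ_{ijkp}. -/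
open Finset

def IsAntisymm4 {ι R : Type*} [Neg R] (Φ : ι → ι → ι → ι → R) : Prop :=
  ∀ i j k l, Φ j i k l = -Φ i j k l ∧ Φ i k j l = -Φ i j k l ∧ Φ i j l k = -Φ i j k l

namespace IsAntisymm4

variable {ι R : Type*} [AddGroup R] {Φ : ι → ι → ι → ι → R}

theorem swap_12 (hΦ : IsAntisymm4 Φ) (a b c d : ι) : Φ b a c d = -Φ a b c d :=
  (hΦ a b c d).1

theorem swap_23 (hΦ : IsAntisymm4 Φ) (a b c d : ι) : Φ a c b d = -Φ a b c d :=
  (hΦ a b c d).2.1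

theorem swap_34 (hΦ : IsAntisymm4 Φ) (a b c d : ι) : Φ a b d c = -Φ a b c d :=
  (hΦ a b c d).2.2

theorem rotate (hΦ : IsAntisymm4 Φ) (a b c d : ι) : Φ b c d a = -Φ a b c d := by
  rw [hΦ.swap_34, hΦ.swap_23, hΦ.swap_12, neg_neg]

theorem swap_14 (hΦ : IsAntisymm4 Φ) (a b c d : ι) : Φ d b c a = -Φ a b c d := by
  rw [hΦ.swap_34, hΦ.swap_23, hΦ.swap_12, hΦ.swap_23, hΦ.swap_34, neg_neg, neg_neg]

theorem rotate_last_three (hΦ : IsAntisymm4 Φ) (a b c d : ι) : Φ a d b c = Φ a b c d := by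
  rw [hΦ.swap_23 a b d c, hΦ.swap_34, neg_neg]

end IsAntisymm4

/-- `β ⋄ Φ` is the difference of the two sides of the Lie-algebra identity at `(i, j, k, l)`. -/
theorem diamond_eq_sub {Φ : Fin 8 → Fin 8 → Fin 8 → Fin 8 → ℝ} (hΦ : IsAntisymm4 Φ)
    (β : Fin 8 → Fin 8 → ℝ) (i j k l : Fin 8) :
    diamond β Φ i j k l = ∑ p, β i p * Φ p j k l -
      ∑ p, (β j p * Φ p k l i + β k p * Φ p l j i + β l p * Φ p j k i) := by
  rw [diamond, ← sum_sub_distrib]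
  refine sum_congr rfl fun p _ => ?_
  rw [hΦ.rotate i p k l, hΦ.swap_14 i l j p, hΦ.rotate_last_three i j p l, hΦ.swap_14 i j k p]
  ring

theorem diamond_vanishes_on_omega21_general
    (Φ : Fin 8 → Fin 8 → Fin 8 → Fin 8 → ℝ)
    (hanti : ∀ i j k l, Φ j i k l = -Φ i j k l ∧ Φ i k j l = -Φ i j k l ∧
      Φ i j l k = -Φ i j k l)
    (β : Fin 8 → Fin 8 → ℝ)
    (hLie : ∀ a p q r, ∑ b, β a b * Φ b p q r =
      ∑ i, (β p i * Φ i q r a + β q i * Φ i r p a + β r i * Φ i p q a)) :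
    ∀ i j k l, diamond β Φ i j k l = 0 := by
  intro i j k l
  rw [diamond_eq_sub hanti, hLie, sub_self]

/-- if `β ∈ Ω²₂₁` satisfies the Lie-algebra identity, then `β ⋄ Φ = 0`. -/
theorem diamond_vanishes_on_omega21
    (Φ : Fin 8 → Fin 8 → Fin 8 → Fin 8 → ℝ)
    (hanti : ∀ i j k l, Φ j i k l = -Φ i j k l ∧ Φ i k j l = -Φ i j k l ∧
      Φ i j l k = -Φ i j k l)
    (β : Fin 8 → Fin 8 → ℝ) (hβanti : ∀ i j, β j i = -β i j)
    (hβ21 : ∀ i j, ∑ a, ∑ b, β a b * Φ a b i j = 2 * β i j)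
    (hLie : ∀ a p q r, ∑ b, β a b * Φ b p q r =
      ∑ i, (β p i * Φ i q r a + β q i * Φ i r p a + β r i * Φ i p q a)) :
    ∀ i j k l, diamond β Φ i j k l = 0 :=
  diamond_vanishes_on_omega21_general Φ hanti β hLie
end

section
/- If the torsion T of a Spin(7)-structure vanishes (T ≡ 0), so that the Bianchi-type identity reads 0 = (1/4)R_{jiab} − (1/8)R_{jimn}Φ_{mnab} for all indices, and if R has the Riemann symmetries and Σ R_{ijkl}Φ_{ajkl} = 0, then the Ricci tensor R_{ij} = Σ_a R_{aiaj} vanishes identically, i.e. the metric is Ricci-flat. -/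
open Finset

/-- if `2R_{jiab} = R_{jimn}Φ_{mnab}` (torsion-free case of the
Bianchi-type identity), and `R` has Riemann symmetries with `R_{ijkl}Φ_{ajkl} = 0`,
then the Ricci tensor vanishes. -/
theorem torsion_free_implies_ricci_flat
    (R : Fin 8 → Fin 8 → Fin 8 → Fin 8 → ℝ)
    (hRanti1 : ∀ i j k l, R j i k l = -R i j k l)
    (hRanti2 : ∀ i j k l, R i j l k = -R i j k l)
    (hRpair : ∀ i j k l, R i j k l = R k l i j)
    (hRBianchi : ∀ i j k l, R i j k l + R j k i l + R k i j l = 0)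
    (Φ : Fin 8 → Fin 8 → Fin 8 → Fin 8 → ℝ)
    (hΦanti : ∀ i j k l, Φ j i k l = -Φ i j k l ∧ Φ i k j l = -Φ i j k l ∧
      Φ i j l k = -Φ i j k l)
    (hRΦ : ∀ i a, ∑ j, ∑ k, ∑ l, R i j k l * Φ a j k l = 0)
    (hTF : ∀ i j a b, 2 * R j i a b = ∑ m, ∑ n, R j i m n * Φ m n a b) :
    ∀ i j, ∑ a, R a i a j = 0 := by
  intro i j
  have key : ∀ a m n : Fin 8, R a i m n * Φ m n a j = R i a m n * Φ j a m n := by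
    intro a m n
    have hr : R a i m n = -R i a m n := hRanti1 i a m n
    have h1 : Φ m n j a = -Φ m n a j := (hΦanti m n a j).2.2
    have h2 : Φ m j n a = -Φ m n j a := (hΦanti m n j a).2.1
    have h3 : Φ j m n a = -Φ m j n a := (hΦanti m j n a).1
    have h4 : Φ j m a n = -Φ j m n a := (hΦanti j m n a).2.2
    have h5 : Φ j a m n = -Φ j m a n := (hΦanti j m a n).2.1
    have hphi : Φ m n a j = -Φ j a m n := by linarith
    rw [hr, hphi]; ring
  have h2 : (2 : ℝ) * ∑ a, R a i a j = 0 := by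
    calc 2 * ∑ a, R a i a j = ∑ a, 2 * R a i a j := by rw [Finset.mul_sum]
      _ = ∑ a, ∑ m, ∑ n, R a i m n * Φ m n a j := by
          exact Finset.sum_congr rfl fun a _ => hTF i a a j
      _ = ∑ a, ∑ m, ∑ n, R i a m n * Φ j a m n := by
          simp only [key]
      _ = 0 := hRΦ i j
  linarith
end
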